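/- arXiv:math/0305429 — 2 statements merged into one kernel-verified Lean document; each statement's English description precedes it below -/
import Mathlib

section
/- Let A be an associative ℝ-algebra and J_1,…,J_r ∈ A pairwise commuting with J_l² = -1, and let e_P be defined as above for p ∈ P. Then e_P J_q = e_P J_p for every q ∈ P, and e_P J_q = -e_P J_p for every q ∉ P. -/
/-- The idempotent `e_P = 2^{-(r-1)} ∏_{q∈P, q≠p}(1 - J_p J_q) ∏_{q∉P}(1 + J_p J_q)`
built from pairwise commuting elements `J_l` with `J_l² = -1` in a unital associative
`ℝ`-algebra `A`. -/
noncomputable def eP {A : Type*} [Ring A] [Algebra ℝ A] {r : ℕ} (J : Fin r → A)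
    (hcomm : ∀ l m, Commute (J l) (J m)) (P : Finset (Fin r)) (p : Fin r) : A :=
  (((2 : ℝ) ^ (r - 1))⁻¹) •
    ((P.erase p).noncommProd (fun q => 1 - J p * J q) (by
        intro a _ b _ _
        have h : Commute (J p * J a) (J p * J b) :=
          ((hcomm p p).mul_right (hcomm p b)).mul_left ((hcomm a p).mul_right (hcomm a b))
        exact (Commute.one_left (1 - J p * J b)).sub_left
          ((Commute.one_right (J p * J a)).sub_right h)) *
     (Pᶜ).noncommProd (fun q => 1 + J p * J q) (by
        intro a _ b _ _
        have h : Commute (J p * J a) (J p * J b) :=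
          ((hcomm p p).mul_right (hcomm p b)).mul_left ((hcomm a p).mul_right (hcomm a b))
        exact (Commute.one_left (1 + J p * J b)).add_left
          ((Commute.one_right (J p * J a)).add_right h)))

/-!
For commuting `a, b` with `a² = b² = -1` one has `(1 - ab) b = a + b = (1 - ab) a` and
`(1 + ab) b = b - a = -(1 + ab) a`. Now `e_P` carries a factor `1 - J_p J_q` for each
`q ∈ P \ {p}` and a factor `1 + J_p J_q` for each `q ∉ P`, and all its factors commute with every
`J_l`; bringing the relevant factor next to `J_q` replaces `J_q` by `J_p` or `-J_p`.
-/

namespace Commute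

variable {R : Type*} [Ring R] {a b : R}

theorem one_sub_mul_mul_right_eq (hab : Commute a b) (ha : a * a = -1) (hb : b * b = -1) :
    (1 - a * b) * b = (1 - a * b) * a :=
  calc (1 - a * b) * b = b + a := by rw [sub_mul, mul_assoc a b b, hb]; noncomm_ring
    _ = (1 - a * b) * a := by
      rw [sub_mul, mul_assoc a b a, ← hab.eq, ← mul_assoc, ha]; noncomm_ring

theorem one_add_mul_mul_right_eq (hab : Commute a b) (ha : a * a = -1) (hb : b * b = -1) :
    (1 + a * b) * b = (1 + a * b) * -a :=
  calc (1 + a * b) * b = b - a := by rw [add_mul, mul_assoc a b b, hb]; noncomm_ring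
    _ = (1 + a * b) * -a := by
      rw [mul_neg, add_mul, mul_assoc a b a, ← hab.eq, ← mul_assoc, ha]; noncomm_ring

end Commute

theorem Finset.noncommProd_mul_eq_of_mem {ι M : Type*} [DecidableEq ι] [Monoid M]
    (s : Finset ι) (f : ι → M) (comm : (s : Set ι).Pairwise (Function.onFun Commute f)) {i : ι} (hi : i ∈ s) {u v : M} (h : f i * u = f i * v) :
    s.noncommProd f comm * u = s.noncommProd f comm * v := by
  rw [← Finset.noncommProd_erase_mul s hi, mul_assoc, h, mul_assoc]

theorem mul_mul_eq_of_mul_eq {M : Type*} [Monoid M] {x y u v : M} (hu : Commute y u)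
    (hv : Commute y v) (h : x * u = x * v) : x * y * u = x * y * v := by
  rw [mul_assoc, hu.eq, ← mul_assoc, h, mul_assoc, ← hv.eq, mul_assoc]

theorem eP_mul_J_general {A : Type*} [Ring A] [Algebra ℝ A] {r : ℕ} (J : Fin r → A)
    (hcomm : ∀ l m, Commute (J l) (J m)) (hsq : ∀ l, J l * J l = -1)
    (P : Finset (Fin r)) (p : Fin r) :
    (∀ q ∈ P, eP J hcomm P p * J q = eP J hcomm P p * J p) ∧
    (∀ q ∉ P, eP J hcomm P p * J q = -(eP J hcomm P p * J p)) := by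
  have hJ : ∀ l q, Commute (J l) (1 + J p * J q) := fun l q =>
    (Commute.one_right _).add_right ((hcomm l p).mul_right (hcomm l q))
  refine ⟨fun q hq => ?_, fun q hq => ?_⟩
  · rcases eq_or_ne q p with rfl | hqp
    · rfl
    simp only [eP, smul_mul_assoc]
    congr 1
    refine mul_mul_eq_of_mul_eq
      (Finset.noncommProd_commute _ _ _ _ fun l _ => hJ q l).symm
      (Finset.noncommProd_commute _ _ _ _ fun l _ => hJ p l).symm ?_
    exact Finset.noncommProd_mul_eq_of_mem _ _ _ (Finset.mem_erase.2 ⟨hqp, hq⟩)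
      ((hcomm p q).one_sub_mul_mul_right_eq (hsq p) (hsq q))
  · simp only [eP, smul_mul_assoc, ← smul_neg, ← mul_neg]
    rw [mul_assoc, mul_assoc]
    congr 2
    exact Finset.noncommProd_mul_eq_of_mem _ _ _ (Finset.mem_compl.2 hq)
      ((hcomm p q).one_add_mul_mul_right_eq (hsq p) (hsq q))

/-- `e_P J_q = e_P J_p` for `q ∈ P`, and `e_P J_q = -e_P J_p` for `q ∉ P`. -/
theorem eP_mul_J {A : Type*} [Ring A] [Algebra ℝ A] {r : ℕ} (J : Fin r → A)
    (hcomm : ∀ l m, Commute (J l) (J m)) (hsq : ∀ l, J l * J l = -1)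
    (P : Finset (Fin r)) (p : Fin r) (hp : p ∈ P) :
    (∀ q ∈ P, eP J hcomm P p * J q = eP J hcomm P p * J p) ∧
    (∀ q ∉ P, eP J hcomm P p * J q = -(eP J hcomm P p * J p)) :=
  eP_mul_J_general J hcomm hsq P p
end

section
/- In the algebra J = ⊗_ℝ^r ℂ, for any fixed p ∈ {1,…,r}, the identity element decomposes as 1 = Σ_{P : p ∈ P ⊆ {1,…,r}} e_P, where e_P are the idempotents defined from the elements J_l = 1⊗⋯⊗i⊗⋯⊗1 (i in the l-th slot). -/
open scoped TensorProduct
open PiTensorProduct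

/-- The element `J_l = 1 ⊗ ⋯ ⊗ i ⊗ ⋯ ⊗ 1` of `⨂[ℝ]^r ℂ`, with `i` in the `l`-th slot. -/
noncomputable def Jslot (r : ℕ) (l : Fin r) : ⨂[ℝ] _ : Fin r, ℂ :=
  tprod ℝ (fun i => if i = l then Complex.I else 1)

lemma Jslot_comm (r : ℕ) (l m : Fin r) : Commute (Jslot r l) (Jslot r m) :=
  mul_comm _ _

lemma one_eq_sum_eP_comm {A : Type*} [CommRing A] [Algebra ℝ A] {r : ℕ} (hr : 1 ≤ r)
    (J : Fin r → A) (hcomm : ∀ l m, Commute (J l) (J m)) (p : Fin r) :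
    (1 : A) = ∑ P ∈ Finset.univ.filter (fun P : Finset (Fin r) => p ∈ P), eP J hcomm P p := by
  classical
  set T : Finset (Fin r) := Finset.univ.erase p with hT
  have hcompl : ∀ P : Finset (Fin r), p ∈ P → Pᶜ = T \ (P.erase p) := by
    intro P hp
    ext q
    simp only [Finset.mem_compl, hT, Finset.mem_sdiff, Finset.mem_erase, Finset.mem_univ,
      and_true, true_and]
    constructor
    · intro h; exact ⟨fun hq => h (hq ▸ hp), fun h2 => h h2.2⟩
    · rintro ⟨hne, h2⟩ hq; exact h2 ⟨hne, hq⟩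
  simp only [eP, Finset.noncommProd_eq_prod]
  rw [← Finset.smul_sum]
  have hsum : ∑ P ∈ Finset.univ.filter (fun P : Finset (Fin r) => p ∈ P),
      ((∏ q ∈ P.erase p, (1 - J p * J q)) * ∏ q ∈ Pᶜ, (1 + J p * J q)) =
      ∑ S ∈ T.powerset, ((∏ q ∈ S, (1 - J p * J q)) * ∏ q ∈ T \ S, (1 + J p * J q)) := by
    refine Finset.sum_bij' (fun P _ => P.erase p) (fun S _ => insert p S) ?_ ?_ ?_ ?_ ?_
    · intro P hP
      simp only [Finset.mem_filter] at hP
      simp only [Finset.mem_powerset, hT]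
      intro q hq
      simp only [Finset.mem_erase] at hq ⊢
      exact ⟨hq.1, Finset.mem_univ q⟩
    · intro S hS
      simp only [Finset.mem_powerset, hT] at hS
      simp [Finset.mem_filter]
    · intro P hP
      simp only [Finset.mem_filter] at hP
      exact Finset.insert_erase hP.2
    · intro S hS
      simp only [Finset.mem_powerset, hT] at hS
      refine Finset.erase_insert ?_
      intro hpS
      exact absurd (hS hpS) (by simp)
    · intro P hP
      simp only [Finset.mem_filter] at hP
      rw [hcompl P hP.2]
  rw [hsum, ← Finset.prod_add]
  have h2 : ∀ q ∈ T, ((1 - J p * J q) + (1 + J p * J q)) = (2 : A) := by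
    intro q _; ring
  rw [Finset.prod_congr rfl h2, Finset.prod_const]
  have hcard : T.card = r - 1 := by
    rw [hT, Finset.card_erase_of_mem (Finset.mem_univ p)]
    simp
  rw [hcard]
  have h2A : (2 : A) ^ (r - 1) = ((2 : ℝ) ^ (r - 1)) • (1 : A) := by
    rw [Algebra.smul_def, mul_one, map_pow, map_ofNat]
  rw [h2A, smul_smul, inv_mul_cancel₀ (by positivity), one_smul]

/-- In `J = ⨂[ℝ]^r ℂ`, for any fixed `p`, the identity decomposes as
`1 = Σ_{P : p ∈ P ⊆ {1,…,r}} e_P`. -/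
theorem one_eq_sum_eP (r : ℕ) (hr : 1 ≤ r) (p : Fin r) :
    (1 : ⨂[ℝ] _ : Fin r, ℂ) =
      ∑ P ∈ Finset.univ.filter (fun P : Finset (Fin r) => p ∈ P),
        eP (Jslot r) (Jslot_comm r) P p :=
  one_eq_sum_eP_comm hr (Jslot r) (Jslot_comm r) p
end
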